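/- (Firm nonexpansiveness principle.) Let X be a real Hilbert space, let F : X → X be firmly nonexpansive, let (z_n)_{n∈ℕ} be a sequence in X converging weakly to z ∈ X, and suppose that F z_n ⇀ x ∈ X. Let C and D be closed affine subspaces of X such that D − D = (C − C)^⊥, and suppose that F z_n − P_C(F z_n) → 0 and (z_n − F z_n) − P_D(z_n − F z_n) → 0. Then x ∈ C, z ∈ x + D, and x = F z. -/

import Mathlib

/-!
Both memberships hold because closed affine subspaces are weakly sequentially closed: `F (zn n)`
and `zn n - F (zn n)` are asymptotic to the points `PC (F (zn n)) ∈ C` and `PD (…) ∈ D`.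
For `x = F z`, firm nonexpansiveness says
`⟪F (zn n) - F z, (zn n - F (zn n)) - (z - F z)⟫ ≥ 0`.
The centred product `⟪F (zn n) - x, (zn n - F (zn n)) - (z - x)⟫` tends to `0`, since up to
null errors its factors lie in `C.direction` and in `D.direction = C.directionᗮ`, and weakly
convergent sequences are bounded. Passing to the limit therefore gives
`⟪x - F z, F z - x⟫ ≥ 0`, i.e. `x = F z`.
-/

open Filter Topology RealInnerProductSpace Pointwise

section

variable {X : Type*} [NormedAddCommGroup X] [InnerProductSpace ℝ X]

/-- Weak convergence `u n ⇀ y`, tested against every vector (by Riesz, every functional). -/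
def WeakTendsto (u : ℕ → X) (y : X) : Prop :=
  ∀ w : X, Tendsto (fun n => ⟪u n, w⟫) atTop (𝓝 ⟪y, w⟫)

theorem WeakTendsto.sub {u v : ℕ → X} {a b : X} (hu : WeakTendsto u a) (hv : WeakTendsto v b) :
    WeakTendsto (fun n => u n - v n) (a - b) := fun w => by
  simpa only [inner_sub_left] using (hu w).sub (hv w)

theorem weakTendsto_const (a : X) : WeakTendsto (fun _ => a) a := fun _ => tendsto_const_nhds

theorem Filter.Tendsto.weakTendsto {u : ℕ → X} {a : X} (h : Tendsto u atTop (𝓝 a)) :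
    WeakTendsto u a := fun _ => h.inner tendsto_const_nhds

/-- Uniform boundedness principle applied to the functionals `⟪u n, ·⟫`. -/
theorem WeakTendsto.exists_norm_le [CompleteSpace X] {u : ℕ → X} {a : X}
    (h : WeakTendsto u a) : ∃ M, ∀ n, ‖u n‖ ≤ M := by
  obtain ⟨M, hM⟩ := banach_steinhaus (g := fun n => innerSL ℝ (u n)) fun w => by
    obtain ⟨B, hB⟩ := (h w).norm.bddAbove_range
    exact ⟨B, fun n => hB (Set.mem_range_self n)⟩
  exact ⟨M, fun n => by simpa only [innerSL_apply_norm] using hM n⟩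

theorem tendsto_inner_zero_of_norm_le_of_tendsto_zero {u v : ℕ → X} {M : ℝ}
    (hu : ∀ n, ‖u n‖ ≤ M) (hv : Tendsto v atTop (𝓝 0)) :
    Tendsto (fun n => ⟪u n, v n⟫) atTop (𝓝 0) := by
  refine squeeze_zero_norm (fun n => ?_) (by simpa using hv.norm.const_mul M)
  calc ‖⟪u n, v n⟫‖ ≤ ‖u n‖ * ‖v n‖ := norm_inner_le_norm _ _
    _ ≤ M * ‖v n‖ := mul_le_mul_of_nonneg_right (hu n) (norm_nonneg _)

theorem WeakTendsto.tendsto_inner_sub_sub {u v : ℕ → X} {a b : X} (hu : WeakTendsto u a)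
    (hv : WeakTendsto v b) (h : Tendsto (fun n => ⟪u n - a, v n - b⟫) atTop (𝓝 0))
    (p q : X) :
    Tendsto (fun n => ⟪u n - p, v n - q⟫) atTop (𝓝 ⟪a - p, b - q⟫) := by
  have hexpand : ∀ n, ⟪u n - p, v n - q⟫ =
      ⟪u n - a, v n - b⟫ + ⟪u n, b - q⟫ + ⟪a - p, v n⟫ - (⟪a, b⟫ - ⟪p, q⟫) := by
    intro n
    simp only [inner_sub_left, inner_sub_right]
    ring
  have hlim := ((h.add (hu (b - q))).add ((hv (a - p)).congr fun n => real_inner_comm _ _)).sub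
    (tendsto_const_nhds (x := ⟪a, b⟫ - ⟪p, q⟫))
  simp only [hexpand]
  convert hlim using 2
  simp only [inner_sub_left, inner_sub_right, real_inner_comm b]
  ring

/-- `S = c + Vᗮᗮ` for its closed direction `V`, and membership in `Vᗮᗮ` is tested by inner
products. -/
theorem AffineSubspace.mem_of_weakTendsto [CompleteSpace X] {S : AffineSubspace ℝ X}
    (hS : IsClosed (S : Set X)) {p : ℕ → X} {y : X} (hp : ∀ n, p n ∈ S)
    (h : WeakTendsto p y) : y ∈ S := by
  have hdir : S.directionᗮᗮ = S.direction := by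
    rw [Submodule.orthogonal_orthogonal_eq_closure]
    exact IsClosed.submodule_topologicalClosure_eq (S.isClosed_direction_iff.mpr hS)
  have hmem : y - p 0 ∈ S.directionᗮᗮ := by
    refine (Submodule.mem_orthogonal' _ _).mpr fun w hw => ?_
    have hzero : ∀ n, ⟪p n - p 0, w⟫ = 0 := fun n =>
      Submodule.inner_right_of_mem_orthogonal (S.vsub_mem_direction (hp n) (hp 0)) hw
    exact tendsto_nhds_unique ((h.sub (weakTendsto_const (p 0))) w)
      (by simpa only [hzero] using tendsto_const_nhds)
  rw [hdir] at hmem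
  simpa using S.vadd_mem_of_mem_direction hmem (hp 0)

theorem AffineSubspace.mem_of_weakTendsto_of_tendsto_sub [CompleteSpace X]
    {S : AffineSubspace ℝ X} (hS : IsClosed (S : Set X)) {u p : ℕ → X} {y : X}
    (hu : WeakTendsto u y) (hp : ∀ n, p n ∈ S)
    (h : Tendsto (fun n => u n - p n) atTop (𝓝 0)) : y ∈ S :=
  S.mem_of_weakTendsto hS hp <| by simpa using hu.sub h.weakTendsto

def FirmlyNonexpansive (F : X → X) : Prop :=
  ∀ a b : X, ‖F a - F b‖ ^ 2 + ‖(a - F a) - (b - F b)‖ ^ 2 ≤ ‖a - b‖ ^ 2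

theorem FirmlyNonexpansive.inner_nonneg {F : X → X} (hF : FirmlyNonexpansive F) (a b : X) :
    0 ≤ ⟪F a - F b, (a - F a) - (b - F b)⟫ := by
  have h := hF a b
  rw [show a - b = (F a - F b) + ((a - F a) - (b - F b)) by abel, norm_add_sq_real] at h
  linarith

/-- Both error terms are null sequences paired with bounded ones. -/
theorem tendsto_inner_zero_of_tendsto_sub_of_inner_eq_zero [CompleteSpace X]
    {u v c f : ℕ → X} {a b : X} (hu : WeakTendsto u a) (hv : WeakTendsto v b)
    (hcf : ∀ n, ⟪c n, f n⟫ = 0)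
    (hc : Tendsto (fun n => u n - c n) atTop (𝓝 0))
    (hf : Tendsto (fun n => v n - f n) atTop (𝓝 0)) :
    Tendsto (fun n => ⟪u n, v n⟫) atTop (𝓝 0) := by
  have hsplit : ∀ n, ⟪u n, v n⟫ = ⟪c n, v n - f n⟫ + ⟪v n, u n - c n⟫ := fun n => by
    rw [inner_sub_right, hcf, inner_sub_right, real_inner_comm (u n), real_inner_comm (c n)]
    ring
  have hcw : WeakTendsto c (a - 0) := by simpa using hu.sub hc.weakTendsto
  obtain ⟨Mc, hMc⟩ := hcw.exists_norm_le
  obtain ⟨Mv, hMv⟩ := hv.exists_norm_le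
  simpa only [hsplit, add_zero] using (tendsto_inner_zero_of_norm_le_of_tendsto_zero hMc hf).add
    (tendsto_inner_zero_of_norm_le_of_tendsto_zero hMv hc)

end

theorem firm_nonexpansiveness_principle_general
    {X : Type*} [NormedAddCommGroup X] [InnerProductSpace ℝ X] [CompleteSpace X]
    (F : X → X)
    (hF : ∀ a b : X, ‖F a - F b‖ ^ 2 + ‖(a - F a) - (b - F b)‖ ^ 2 ≤ ‖a - b‖ ^ 2)
    (z x : X) (zn : ℕ → X)
    (hzweak : ∀ w : X, Tendsto (fun n => ⟪zn n, w⟫) atTop (𝓝 ⟪z, w⟫))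
    (hFweak : ∀ w : X, Tendsto (fun n => ⟪F (zn n), w⟫) atTop (𝓝 ⟪x, w⟫))
    (C D : AffineSubspace ℝ X)
    (hCcl : IsClosed (C : Set X)) (hDcl : IsClosed (D : Set X))
    (hdir : D.direction = C.directionᗮ)
    (PC PD : X → X)
    (hPC : ∀ w : X, PC w ∈ C ∧ ∀ v ∈ C, ‖w - PC w‖ ≤ ‖w - v‖)
    (hPD : ∀ w : X, PD w ∈ D ∧ ∀ v ∈ D, ‖w - PD w‖ ≤ ‖w - v‖)
    (hFproj : Tendsto (fun n => F (zn n) - PC (F (zn n))) atTop (𝓝 0))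
    (hIded : Tendsto (fun n => (zn n - F (zn n)) - PD (zn n - F (zn n))) atTop (𝓝 0)) :
    x ∈ C ∧ z ∈ {x} + (D : Set X) ∧ x = F z := by
  have hFw : WeakTendsto (fun n => F (zn n)) x := hFweak
  have hIweak : WeakTendsto (fun n => zn n - F (zn n)) (z - x) := WeakTendsto.sub hzweak hFw
  have hxC : x ∈ C :=
    C.mem_of_weakTendsto_of_tendsto_sub hCcl hFw (fun n => (hPC _).1) hFproj
  have hzxD : z - x ∈ D :=
    D.mem_of_weakTendsto_of_tendsto_sub hDcl hIweak (fun n => (hPD _).1) hIded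
  have hcentered :
      Tendsto (fun n => ⟪F (zn n) - x, (zn n - F (zn n)) - (z - x)⟫) atTop (𝓝 0) :=
    tendsto_inner_zero_of_tendsto_sub_of_inner_eq_zero
      (hFw.sub (weakTendsto_const x)) (hIweak.sub (weakTendsto_const (z - x)))
      (c := fun n => PC (F (zn n)) - x) (f := fun n => PD (zn n - F (zn n)) - (z - x))
      (fun n => Submodule.inner_right_of_mem_orthogonal (C.vsub_mem_direction (hPC _).1 hxC)
        (hdir ▸ D.vsub_mem_direction (hPD _).1 hzxD))
      (by simpa only [sub_sub_sub_cancel_right] using hFproj)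
      (by simpa only [sub_sub_sub_cancel_right] using hIded)
  have hlim := hFw.tendsto_inner_sub_sub hIweak hcentered (F z) (z - F z)
  have hnonneg : 0 ≤ ⟪x - F z, (z - x) - (z - F z)⟫ :=
    ge_of_tendsto' hlim fun n => FirmlyNonexpansive.inner_nonneg hF (zn n) z
  refine ⟨hxC, Set.mem_add.mpr ⟨x, rfl, z - x, hzxD, add_sub_cancel x z⟩, ?_⟩
  rw [show (z - x) - (z - F z) = -(x - F z) by abel, inner_neg_right, neg_nonneg,
    real_inner_self_nonpos, sub_eq_zero] at hnonneg
  exact hnonneg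

theorem firm_nonexpansiveness_principle
    {X : Type*} [NormedAddCommGroup X] [InnerProductSpace ℝ X] [CompleteSpace X]
    (F : X → X)
    (hF : ∀ a b : X, ‖F a - F b‖ ^ 2 + ‖(a - F a) - (b - F b)‖ ^ 2 ≤ ‖a - b‖ ^ 2)
    (z x : X) (zn : ℕ → X)
    (hzweak : ∀ w : X, Tendsto (fun n => ⟪zn n, w⟫) atTop (𝓝 ⟪z, w⟫))
    (hFweak : ∀ w : X, Tendsto (fun n => ⟪F (zn n), w⟫) atTop (𝓝 ⟪x, w⟫))
    (C D : AffineSubspace ℝ X)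
    (hCne : (C : Set X).Nonempty) (hDne : (D : Set X).Nonempty)
    (hCcl : IsClosed (C : Set X)) (hDcl : IsClosed (D : Set X))
    (hdir : D.direction = C.directionᗮ)
    (PC PD : X → X)
    (hPC : ∀ w : X, PC w ∈ C ∧ ∀ v ∈ C, ‖w - PC w‖ ≤ ‖w - v‖)
    (hPD : ∀ w : X, PD w ∈ D ∧ ∀ v ∈ D, ‖w - PD w‖ ≤ ‖w - v‖)
    (hFproj : Tendsto (fun n => F (zn n) - PC (F (zn n))) atTop (𝓝 0))
    (hIded : Tendsto (fun n => (zn n - F (zn n)) - PD (zn n - F (zn n))) atTop (𝓝 0)) :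
    x ∈ C ∧ z ∈ {x} + (D : Set X) ∧ x = F z :=
  firm_nonexpansiveness_principle_general F hF z x zn hzweak hFweak C D hCcl hDcl hdir PC PD hPC hPD
    hFproj hIded
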